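/- arXiv:2604.22459 — 3 statements merged into one kernel-verified Lean document; each statement's English description precedes it below -/
import Mathlib

section
/- The constant 1/2 together with the connectives ¬x = 1-x and truncated sum x ⊕ y = min(1,x+y) and product x·y generates all dyadic rationals in [0,1]: for every m, n with 0 ≤ m ≤ 2^n, the rational m/2^n is obtainable from 1/2 by finitely many applications of ¬, ⊕, and multiplication. -/
/-!
Every dyadic `m / 2 ^ (n + 1)` in `[0, 1]` is `x / 2` or `(1 + x) / 2` for a dyadic `x = m' / 2 ^ n`
in `[0, 1]`, and both maps are generated: `x / 2 = x · ½` and `(1 + x) / 2 = ¬(¬x · ½)`.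
-/

/-- The smallest set of reals containing 1/2 and closed under Łukasiewicz
negation, truncated sum, and product. -/
inductive GenHalf : ℝ → Prop
  | half : GenHalf (1/2)
  | neg {x : ℝ} : GenHalf x → GenHalf (1 - x)
  | oplus {x y : ℝ} : GenHalf x → GenHalf y → GenHalf (min 1 (x + y))
  | mul {x y : ℝ} : GenHalf x → GenHalf y → GenHalf (x * y)

namespace GenHalf

lemma one : GenHalf 1 := by
  convert oplus half half
  norm_num

lemma zero : GenHalf 0 := by
  simpa using one.neg

variable {x : ℝ}

lemma div_two (hx : GenHalf x) : GenHalf (x / 2) := by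
  simpa [div_eq_mul_one_div x] using hx.mul half

lemma one_add_div_two (hx : GenHalf x) : GenHalf ((1 + x) / 2) := by
  convert hx.neg.div_two.neg using 1
  ring

end GenHalf

/-- Every dyadic rational m/2^n in [0,1] is generated from 1/2 by
¬, ⊕, and multiplication. -/
theorem stmt_5 (m n : ℕ) (h : m ≤ 2 ^ n) :
    GenHalf ((m : ℝ) / 2 ^ n) := by
  induction n generalizing m with
  | zero =>
    interval_cases m
    · simpa using GenHalf.zero
    · simpa using GenHalf.one
  | succ n ih =>
    rcases le_or_gt m (2 ^ n) with hm | hm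
    · convert (ih m hm).div_two using 1
      rw [pow_succ, div_div]
    · obtain ⟨k, rfl⟩ := Nat.exists_eq_add_of_le hm.le
      have hk : k ≤ 2 ^ n := by rw [pow_succ] at h; omega
      convert (ih k hk).one_add_div_two using 1
      push_cast
      field_simp
      ring
end

section
/- There exists an infinitely branching Kripke model valued in [0,1] in which the formula △◊p → ◊△p fails: namely a world w with countably many successors w_i where p has value i/(i+1), so that △◊p has value 1 at w (since sup_i i/(i+1) = 1) but ◊△p has value 0 at w (since no successor gives p value 1); hence the Łukasiewicz implication △◊p → ◊△p has value 0 < 1 at w. -/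
open scoped Classical

/-- Fuzzy diamond: supremum of values over accessible worlds, with sup ∅ = 0. -/
noncomputable def diaVal {W : Type*} (R : W → W → Prop) (f : W → ℝ) (w : W) : ℝ :=
  if {w' | R w w'}.Nonempty then sSup (f '' {w' | R w w'}) else 0

/-- Crisp Delta operator: △x = 1 if x = 1, else 0. -/
noncomputable def deltaVal (x : ℝ) : ℝ := if x = 1 then 1 else 0

/-- Łukasiewicz implication. -/
noncomputable def lukImp (x y : ℝ) : ℝ := min 1 (1 - x + y)

/-!
The root of an infinite fan whose leaves carry the values `i / (i + 1)`: these approach `1`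
without reaching it, so `◊p` is `1` at the root while `△p`, hence `◊△p`, is `0` everywhere
below it. No finite fan can do this, since a finite supremum is attained.
-/

lemma diaVal_eq_iSup_of_setOf_eq_range {W ι : Type*} [Nonempty ι] {R : W → W → Prop} {w : W}
    {ws : ι → W} (h : {w' | R w w'} = Set.range ws) (f : W → ℝ) :
    diaVal R f w = ⨆ i, f (ws i) := by
  rw [diaVal, if_pos (h ▸ Set.range_nonempty ws), h, ← Set.range_comp, sSup_range]
  rfl

lemma deltaVal_one : deltaVal 1 = 1 := if_pos rfl

lemma deltaVal_of_ne_one {x : ℝ} (hx : x ≠ 1) : deltaVal x = 0 := if_neg hx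

lemma lukImp_one_zero : lukImp 1 0 = 0 := by norm_num [lukImp]

lemma natCast_div_succ_lt_one (i : ℕ) : (i : ℝ) / (i + 1) < 1 := by
  rw [div_lt_one (by positivity)]
  linarith

lemma iSup_natCast_div_succ : ⨆ i : ℕ, (i : ℝ) / (i + 1) = 1 := by
  refine ciSup_eq_of_forall_le_of_forall_lt_exists_gt (fun i => (natCast_div_succ_lt_one i).le)
    fun y hy => ?_
  have hlim := tendsto_natCast_div_add_atTop (1 : ℝ)
  exact (hlim.eventually (lt_mem_nhds hy)).exists

def fanRel : Option ℕ → Option ℕ → Prop := fun _ u => u.isSome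

noncomputable def fanVal : Option ℕ → ℝ := fun u => u.elim 0 fun i => i / (i + 1)

lemma setOf_fanRel_none : {u | fanRel none u} = Set.range some := by
  ext (_ | _) <;> simp [fanRel]

lemma fanVal_mem_Icc (u : Option ℕ) : fanVal u ∈ Set.Icc (0 : ℝ) 1 := by
  cases u with
  | none => simp [fanVal]
  | some i => exact ⟨by simp only [fanVal, Option.elim]; positivity, (natCast_div_succ_lt_one i).le⟩

lemma diaVal_fanVal_none : diaVal fanRel fanVal none = 1 := by
  rw [diaVal_eq_iSup_of_setOf_eq_range setOf_fanRel_none]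
  exact iSup_natCast_div_succ

lemma diaVal_deltaVal_fanVal_none : diaVal fanRel (fun u => deltaVal (fanVal u)) none = 0 := by
  rw [diaVal_eq_iSup_of_setOf_eq_range setOf_fanRel_none]
  simp only [fanVal, Option.elim, deltaVal_of_ne_one (natCast_div_succ_lt_one _).ne, ciSup_const]

/-- There is an (infinitely branching) [0,1]-valued Kripke model in which
△◊p → ◊△p fails: a world with countably many successors w_i where p has
value i/(i+1), so △◊p has value 1 but ◊△p has value 0, and the Łukasiewicz
implication gets value 0 < 1. -/
theorem stmt_8 :
    ∃ (W : Type) (R : W → W → Prop) (v : W → ℝ),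
      (∀ u, v u ∈ Set.Icc (0:ℝ) 1) ∧
      ∃ w : W,
        (∃ ws : ℕ → W, Function.Injective ws ∧ {w' | R w w'} = Set.range ws ∧
          ∀ i : ℕ, v (ws i) = (i : ℝ) / (i + 1)) ∧
        deltaVal (diaVal R v w) = 1 ∧
        diaVal R (fun u => deltaVal (v u)) w = 0 ∧
        lukImp (deltaVal (diaVal R v w)) (diaVal R (fun u => deltaVal (v u)) w)
          = 0 ∧ (0:ℝ) < 1 := by
  refine ⟨Option ℕ, fanRel, fanVal, fanVal_mem_Icc, none,
    ⟨some, Option.some_injective ℕ, setOf_fanRel_none, fun _ => rfl⟩, ?_,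
    diaVal_deltaVal_fanVal_none, ?_, one_pos⟩
  · rw [diaVal_fanVal_none, deltaVal_one]
  · rw [diaVal_fanVal_none, deltaVal_one, diaVal_deltaVal_fanVal_none, lukImp_one_zero]
end

section
/- A formula φ of the outer probabilistic language is satisfiable in a 'standard' probabilistic model if and only if it is satisfiable in a sample-independent model. Concretely (one nontrivial direction): given a sample-independent model M = ⟨W, E, R, 𝔛, μ, V⟩ with inner event frame 𝔛 = ⟨W_𝔛, E_𝔛, R_𝔛⟩ and a world w ∈ W with I_M(φ, w) < 1, the model M' obtained by taking the disjoint union W ⊎ W_𝔛 of the outer and inner frames, extending each measure μ_{w,A} by zero outside W_𝔛, and keeping the valuation, is a standard probabilistic model satisfying I_{M'}(φ, w) = I_M(φ, w) for all w ∈ W and all formulas φ. -/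
open scoped Classical

/-- Event formulas (inner layer): classical multimodal formulas with
epistemic operators `know A` and action operators `box a`. -/
inductive EvForm (Ag Ac : Type) : Type
  | var : ℕ → EvForm Ag Ac
  | neg : EvForm Ag Ac → EvForm Ag Ac
  | and : EvForm Ag Ac → EvForm Ag Ac → EvForm Ag Ac
  | know : Ag → EvForm Ag Ac → EvForm Ag Ac
  | box : Ac → EvForm Ag Ac → EvForm Ag Ac

/-- Truth set of an event formula in an event model ⟨W, E, R, V⟩. -/
def evSem {Ag Ac W : Type} (E : Ag → W → W → Prop) (R : Ac → W → W → Prop)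
    (V : ℕ → Set W) : EvForm Ag Ac → Set W
  | .var n => V n
  | .neg α => (evSem E R V α)ᶜ
  | .and α β => evSem E R V α ∩ evSem E R V β
  | .know A α => {w | ∀ w', E A w w' → w' ∈ evSem E R V α}
  | .box a α => {w | ∀ w', R a w w' → w' ∈ evSem E R V α}

/-- Outer probabilistic formulas: probabilistic atoms Pr_A(α) over event
formulas, Łukasiewicz negation and implication, product conjunction, product
implication, the constant 1/2, and epistemic/action modalities. -/
inductive PrForm (Ag Ac : Type) : Type
  | pr : Ag → EvForm Ag Ac → PrForm Ag Ac
  | neg : PrForm Ag Ac → PrForm Ag Ac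
  | imp : PrForm Ag Ac → PrForm Ag Ac → PrForm Ag Ac
  | times : PrForm Ag Ac → PrForm Ag Ac → PrForm Ag Ac
  | pimp : PrForm Ag Ac → PrForm Ag Ac → PrForm Ag Ac
  | half : PrForm Ag Ac
  | know : Ag → PrForm Ag Ac → PrForm Ag Ac
  | box : Ac → PrForm Ag Ac → PrForm Ag Ac

/-- Interpretation of outer probabilistic formulas over an outer frame
⟨Wo, E, R⟩ and an inner event model ⟨Wi, Ei, Ri, Vi⟩, with measures
μ_{w,A} on subsets of Wi (a standard probabilistic model is the special case
Wi = Wo with the same frame; outer modalities are infima over accessible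
worlds, with inf ∅ = 1). -/
noncomputable def prSem {Ag Ac Wo Wi : Type}
    (E : Ag → Wo → Wo → Prop) (R : Ac → Wo → Wo → Prop)
    (Ei : Ag → Wi → Wi → Prop) (Ri : Ac → Wi → Wi → Prop) (Vi : ℕ → Set Wi)
    (μ : Wo → Ag → Set Wi → ℝ) : PrForm Ag Ac → Wo → ℝ
  | .pr A α, w => μ w A (evSem Ei Ri Vi α)
  | .neg φ, w => 1 - prSem E R Ei Ri Vi μ φ w
  | .imp φ χ, w =>
      min 1 (1 - prSem E R Ei Ri Vi μ φ w + prSem E R Ei Ri Vi μ χ w)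
  | .times φ χ, w => prSem E R Ei Ri Vi μ φ w * prSem E R Ei Ri Vi μ χ w
  | .pimp φ χ, w =>
      if prSem E R Ei Ri Vi μ φ w ≤ prSem E R Ei Ri Vi μ χ w then 1
      else prSem E R Ei Ri Vi μ χ w / prSem E R Ei Ri Vi μ φ w
  | .half, _ => 1/2
  | .know A φ, w =>
      if {w' | E A w w'}.Nonempty
      then sInf ((prSem E R Ei Ri Vi μ φ) '' {w' | E A w w'}) else 1
  | .box a φ, w =>
      if {w' | R a w w'}.Nonempty
      then sInf ((prSem E R Ei Ri Vi μ φ) '' {w' | R a w w'}) else 1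

/-- Disjoint union of two relations on a sum type. -/
def sumRel {α β : Type} (r : α → α → Prop) (s : β → β → Prop) :
    α ⊕ β → α ⊕ β → Prop
  | Sum.inl a, Sum.inl b => r a b
  | Sum.inr a, Sum.inr b => s a b
  | _, _ => False

/-! The outer formulas only see the inner part of the union through the measures, and on the inner
part the union frame is just the inner frame; so `Pr_A(α)` takes the same value, and every outer
modality at an outer world ranges over the same outer worlds. -/

theorem setOf_sumRel_inl {α β : Type} (r : α → α → Prop) (s : β → β → Prop) (a : α) :
    {y | sumRel r s (Sum.inl a) y} = Sum.inl '' {b | r a b} := by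
  ext (b | b) <;> simp [sumRel]

theorem preimage_inr_evSem {Ag Ac Wo Wi : Type}
    (E : Ag → Wo → Wo → Prop) (R : Ac → Wo → Wo → Prop)
    (Ei : Ag → Wi → Wi → Prop) (Ri : Ac → Wi → Wi → Prop) (Vi : ℕ → Set Wi)
    (V : ℕ → Set (Wo ⊕ Wi)) (hV : ∀ n, Sum.inr ⁻¹' V n = Vi n) (α : EvForm Ag Ac) :
    Sum.inr ⁻¹' evSem (fun A => sumRel (E A) (Ei A)) (fun a => sumRel (R a) (Ri a)) V α
      = evSem Ei Ri Vi α := by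
  induction α with
  | var n => exact hV n
  | neg α ih => simp only [evSem, Set.preimage_compl, ih]
  | and α β ihα ihβ => simp only [evSem, Set.preimage_inter, ihα, ihβ]
  | know A α ih | box a α ih =>
    ext x
    simp [evSem, Sum.forall, sumRel, ← ih]

noncomputable def infOrOne {α : Type} (f : α → ℝ) (S : Set α) : ℝ :=
  if S.Nonempty then sInf (f '' S) else 1

theorem infOrOne_image {α β : Type} (f : β → ℝ) (e : α → β) (S : Set α) :
    infOrOne f (e '' S) = infOrOne (f ∘ e) S := by
  simp only [infOrOne, Set.image_nonempty, Set.image_image, Function.comp_def]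

theorem stmt_11_general {Ag Ac Wo Wi : Type}
    (E : Ag → Wo → Wo → Prop) (R : Ac → Wo → Wo → Prop)
    (Ei : Ag → Wi → Wi → Prop) (Ri : Ac → Wi → Wi → Prop) (Vi : ℕ → Set Wi)
    (μ : Wo → Ag → Set Wi → ℝ)
    (μ' : Wo ⊕ Wi → Ag → Set (Wo ⊕ Wi) → ℝ)
    (hμ' : ∀ w A S, μ' (Sum.inl w) A S = μ w A (Sum.inr ⁻¹' S)) :
    ∀ (φ : PrForm Ag Ac) (w : Wo),
      prSem (fun A => sumRel (E A) (Ei A)) (fun a => sumRel (R a) (Ri a))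
        (fun A => sumRel (E A) (Ei A)) (fun a => sumRel (R a) (Ri a))
        (fun n => Sum.inr '' Vi n) μ' φ (Sum.inl w)
      = prSem E R Ei Ri Vi μ φ w := by
  intro φ
  induction φ with
  | pr A α =>
    intro w
    simp only [prSem, hμ']
    rw [preimage_inr_evSem E R Ei Ri Vi _ fun n => Set.preimage_image_eq _ Sum.inr_injective]
  | neg φ ih => intro w; simp [prSem, ih]
  | imp φ χ ih₁ ih₂ | times φ χ ih₁ ih₂ | pimp φ χ ih₁ ih₂ =>
    intro w; simp [prSem, ih₁, ih₂]
  | half => intro w; rfl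
  | know _ φ ih | box _ φ ih =>
    intro w
    change infOrOne _ _ = infOrOne _ _
    rw [setOf_sumRel_inl, infOrOne_image]
    exact congrArg (infOrOne · _) (funext ih)

/-- Every sample-independent model can be turned into an equivalent standard
probabilistic model: take the disjoint union W ⊎ W_𝔛 of the outer and inner
frames, extend each measure μ_{w,A} by zero outside W_𝔛, and keep the
valuation (on the inner part). Then the interpretation of every outer formula
φ at every outer world w is unchanged; in particular any φ with
I_M(φ, w) < 1 in the SI model remains so in the standard model. -/
theorem stmt_11 {Ag Ac Wo Wi : Type}
    (E : Ag → Wo → Wo → Prop) (R : Ac → Wo → Wo → Prop)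
    (Ei : Ag → Wi → Wi → Prop) (Ri : Ac → Wi → Wi → Prop) (Vi : ℕ → Set Wi)
    (μ : Wo → Ag → Set Wi → ℝ)
    (hE : ∀ A, Equivalence (E A)) (hEi : ∀ A, Equivalence (Ei A))
    (hμ : ∀ w A, μ w A Set.univ = 1 ∧ (∀ S, 0 ≤ μ w A S ∧ μ w A S ≤ 1) ∧
      ∀ S T : Set Wi, Disjoint S T → μ w A (S ∪ T) = μ w A S + μ w A T)
    (μ' : Wo ⊕ Wi → Ag → Set (Wo ⊕ Wi) → ℝ)
    (hμ' : ∀ w A S, μ' (Sum.inl w) A S = μ w A (Sum.inr ⁻¹' S)) :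
    ∀ (φ : PrForm Ag Ac) (w : Wo),
      prSem (fun A => sumRel (E A) (Ei A)) (fun a => sumRel (R a) (Ri a))
        (fun A => sumRel (E A) (Ei A)) (fun a => sumRel (R a) (Ri a))
        (fun n => Sum.inr '' Vi n) μ' φ (Sum.inl w)
      = prSem E R Ei Ri Vi μ φ w :=
  stmt_11_general E R Ei Ri Vi μ μ' hμ'
end
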